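/- Let N and l be positive integers with l dividing N and l ≥ 2, and let W_{N+1} be the wheel graph on vertices {1, …, N+1}, with rim edges {i, i+1 mod N} for i ∈ {1, …, N} (indices taken in {1,…,N}) and hub edges {i, N+1} for all i ∈ {1, …, N}. Let π be the permutation that, for each j ∈ {0, 1, …, l−1}, exchanges vertex jN/l + 1 with vertex (j+1)N/l, and fixes all other vertices. Then the swap routing time satisfies rt_S(W_{N+1}, π) ≥ min{2l, N/l − 1}. -/

import Mathlib

/-- A swap round on `G`: a permutation that is a product of transpositions along a
matching of `G`, i.e. an involution moving every non-fixed vertex to a neighbor. -/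
def IsSwapRound {V : Type*} (G : SimpleGraph V) (σ : Equiv.Perm V) : Prop :=
  σ * σ = 1 ∧ ∀ v, σ v ≠ v → G.Adj v (σ v)

/-- The swap routing time of a permutation `π` on `G`: the least number of swap rounds
whose product is `π`. -/
noncomputable def rtS {V : Type*} (G : SimpleGraph V) (π : Equiv.Perm V) : ℕ :=
  sInf {T : ℕ | ∃ L : List (Equiv.Perm V), L.length = T ∧
    (∀ σ ∈ L, IsSwapRound G σ) ∧ L.prod = π}

/-- The wheel graph on `N + 1` vertices (0-indexed: rim vertices `0, …, N−1` forming an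
`N`-cycle, hub vertex `N` adjacent to every rim vertex). -/
def wheelGraph (N : ℕ) : SimpleGraph (Fin (N + 1)) where
  Adj i j := i ≠ j ∧
    ((i.val < N ∧ j.val < N ∧ ((i.val + 1) % N = j.val ∨ (j.val + 1) % N = i.val))
      ∨ i.val = N ∨ j.val = N)
  symm := by
    constructor
    intro i j h
    exact ⟨h.1.symm, by tauto⟩
  loopless := ⟨fun i h => h.1 rfl⟩

/-- The permutation `π_wheel^l` exchanging, for each `j < l`, the rim vertex `j·(N/l)`
with the rim vertex `(j+1)·(N/l) − 1` (0-indexed; these are the vertices `j·N/l + 1` and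
`(j+1)·N/l` in 1-indexed notation), and fixing all other vertices. -/
def wheelPerm (N l : ℕ) : Equiv.Perm (Fin (N + 1)) :=
  ((List.range l).map fun j =>
    Equiv.swap (⟨j * (N / l) % (N + 1), Nat.mod_lt _ (Nat.succ_pos N)⟩ : Fin (N + 1))
      ⟨((j + 1) * (N / l) - 1) % (N + 1), Nat.mod_lt _ (Nat.succ_pos N)⟩).prod

/-!
Follow the 2l rim vertices moved by the permutation, as tokens moved by the swap rounds. A token
that never enters the hub only walks along the rim cycle, one step per round at most. It has to
travel between two vertices that are N/l − 1 apart, and since 2(N/l − 1) < N, going the other way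
round is longer, so at least N/l − 1 rounds are needed. If every moved token does pass through the
hub, it is there strictly after time 0. Only one token occupies the hub at a time, so 2l tokens
need at least 2l rounds.
-/

open Equiv

section SwapRounds

variable {V : Type*}

theorem isSwapRound_swap [DecidableEq V] {G : SimpleGraph V} {x y : V} (h : G.Adj x y) :
    IsSwapRound G (swap x y) := by
  refine ⟨swap_mul_self x y, fun v hv => ?_⟩
  obtain ⟨-, rfl | rfl⟩ := swap_apply_ne_self_iff.mp hv
  · simpa using h
  · simpa using h.symm

theorem exists_swapRounds_prod_eq_of_forall_adj [DecidableEq V] [Finite V] {G : SimpleGraph V}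
    (c : V) (hc : ∀ v, v ≠ c → G.Adj v c) (π : Perm V) :
    ∃ L : List (Perm V), (∀ σ ∈ L, IsSwapRound G σ) ∧ L.prod = π := by
  refine Perm.swap_induction_on π ⟨[], by simp, rfl⟩ ?_
  rintro f x y hxy ⟨L, hL, rfl⟩
  have hswap : ∃ K : List (Perm V), (∀ σ ∈ K, IsSwapRound G σ) ∧ K.prod = swap x y := by
    by_cases hxc : x = c
    · subst hxc
      exact ⟨[swap y x], by simpa using isSwapRound_swap (hc y hxy.symm), by simp [swap_comm]⟩
    by_cases hyc : y = c
    · subst hyc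
      exact ⟨[swap x y], by simpa using isSwapRound_swap (hc x hxy), by simp⟩
    refine ⟨[swap c x, swap y c, swap c x], ?_, ?_⟩
    · simp only [List.mem_cons, List.not_mem_nil, or_false]
      rintro σ (rfl | rfl | rfl)
      exacts [isSwapRound_swap (hc x hxc).symm, isSwapRound_swap (hc y hyc),
        isSwapRound_swap (hc x hxc).symm]
    · simpa [mul_assoc] using swap_mul_swap_mul_swap hyc hxy.symm
  obtain ⟨K, hK, hKprod⟩ := hswap
  refine ⟨K ++ L, fun σ hσ => ?_, by rw [List.prod_append, hKprod]⟩
  exact (List.mem_append.mp hσ).elim (hK σ) (hL σ)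

theorem le_rtS {G : SimpleGraph V} {π : Perm V} {b : ℕ}
    (hπ : ∃ L : List (Perm V), (∀ σ ∈ L, IsSwapRound G σ) ∧ L.prod = π)
    (hb : ∀ L : List (Perm V), (∀ σ ∈ L, IsSwapRound G σ) → L.prod = π → b ≤ L.length) :
    b ≤ rtS G π := by
  obtain ⟨L, hL, hLπ⟩ := hπ
  refine le_csInf ⟨L.length, L, rfl, hL, hLπ⟩ ?_
  rintro _ ⟨K, rfl, hK, hKπ⟩
  exact hb K hK hKπ

/- A suffix `M` of `L` consists of the last `M.length` rounds, which act first, so `M.prod v` is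
where the token starting at `v` sits after `M.length` rounds. -/
theorem card_le_length_of_forall_visit {L : List (Perm V)} {c : V} (S : Finset V)
    (hS : ∀ v ∈ S, v ≠ c ∧ ∃ M, M <:+ L ∧ M.prod v = c) : S.card ≤ L.length := by
  choose! M hM using fun v hv => (hS v hv).2
  calc S.card ≤ (Finset.Icc 1 L.length).card := by
        refine Finset.card_le_card_of_injOn (fun v => (M v).length) (fun v hv => ?_)
          (fun v hv w hw hvw => ?_)
        · have hne : M v ≠ [] := by
            rintro h
            exact (hS v hv).1 (by simpa [h] using (hM v hv).2)
          simp only [Finset.coe_Icc, Set.mem_Icc]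
          exact ⟨List.length_pos_iff.mpr hne, (hM v hv).1.length_le⟩
        · have hMvw : M v = M w := by
            rw [List.suffix_iff_eq_drop.mp (hM v hv).1, List.suffix_iff_eq_drop.mp (hM w hw).1]
            simp only at hvw
            rw [hvw]
          exact (M v).prod.injective (by rw [(hM v hv).2, hMvw, (hM w hw).2])
    _ = L.length := by simp

theorem exists_abs_le_length_of_forall_suffix_ne {A : Type*} [AddGroupWithOne A]
    {G : SimpleGraph V} (f : V → A) (c : V)
    (hf : ∀ x y, G.Adj x y → x ≠ c → y ≠ c → f y = f x + 1 ∨ f x = f y + 1)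
    {L : List (Perm V)} (hL : ∀ σ ∈ L, IsSwapRound G σ) {v : V}
    (hv : ∀ M, M <:+ L → M.prod v ≠ c) :
    ∃ k : ℤ, |k| ≤ L.length ∧ f (L.prod v) = f v + k := by
  induction L with
  | nil => exact ⟨0, by simp, by simp⟩
  | cons σ L ih =>
    obtain ⟨k, hk, hfk⟩ := ih (fun τ hτ => hL τ (List.mem_cons_of_mem _ hτ))
      (fun M hM => hv M (hM.trans (List.suffix_cons σ L)))
    have hx : L.prod v ≠ c := hv L (List.suffix_cons σ L)
    have hy : σ (L.prod v) ≠ c := by simpa using hv (σ :: L) List.suffix_rfl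
    rw [List.prod_cons, Perm.mul_apply, List.length_cons]
    by_cases hσ : σ (L.prod v) = L.prod v
    · exact ⟨k, by push_cast; linarith, by rw [hσ, hfk]⟩
    rcases hf _ _ ((hL σ List.mem_cons_self).2 _ hσ) hx hy with h | h
    · refine ⟨k + 1, ?_, ?_⟩
      · push_cast
        linarith [abs_add_le k 1, abs_one (α := ℤ)]
      · rw [h, hfk, Int.cast_add, Int.cast_one, add_assoc]
    · refine ⟨k - 1, ?_, ?_⟩
      · push_cast
        linarith [abs_sub k 1, abs_one (α := ℤ)]
      · rw [eq_sub_of_add_eq h.symm, hfk, Int.cast_sub, Int.cast_one, add_sub_assoc]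

theorem prod_map_swap_apply_left [DecidableEq V] {ι : Type*} {s : List ι} (hs : s.Nodup)
    {a b : ι → V} (ha : ∀ i ∈ s, ∀ j ∈ s, a i = a j → i = j)
    (hb : ∀ i ∈ s, ∀ j ∈ s, b i = b j → i = j) (hab : ∀ i ∈ s, ∀ j ∈ s, a i ≠ b j)
    {j : ι} (hj : j ∈ s) :
    (s.map fun i => swap (a i) (b i)).prod (a j) = b j := by
  induction s with
  | nil => simp at hj
  | cons i s ih =>
    rw [List.map_cons, List.prod_cons, Perm.mul_apply]
    obtain rfl | hji := eq_or_ne j i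
    · have hjs : j ∉ s := (List.nodup_cons.mp hs).1
      have hfix : (s.map fun i => swap (a i) (b i)).prod ∈ MulAction.stabilizer (Perm V) (a j) := by
        refine Subgroup.list_prod_mem _ ?_
        simp only [List.mem_map]
        rintro _ ⟨i, hi, rfl⟩
        rw [MulAction.mem_stabilizer_iff, Perm.smul_def]
        refine swap_apply_of_ne_of_ne (fun h => ?_) (hab j hj i (List.mem_cons_of_mem _ hi))
        exact hjs (ha j hj i (List.mem_cons_of_mem _ hi) h ▸ hi)
      rw [MulAction.mem_stabilizer_iff, Perm.smul_def] at hfix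
      rw [hfix, swap_apply_left]
    · have hjs : j ∈ s := (List.mem_cons.mp hj).resolve_left hji
      have sub : ∀ k ∈ s, k ∈ i :: s := fun k hk => List.mem_cons_of_mem _ hk
      rw [ih (List.nodup_cons.mp hs).2 (fun i hi j hj => ha i (sub i hi) j (sub j hj))
        (fun i hi j hj => hb i (sub i hi) j (sub j hj))
        (fun i hi j hj => hab i (sub i hi) j (sub j hj)) hjs]
      exact swap_apply_of_ne_of_ne (hab i List.mem_cons_self j hj).symm
        (fun h => hji (hb j hj i List.mem_cons_self h))

end SwapRounds

section Wheel

variable {N l j : ℕ}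

theorem wheelGraph_adj_last {v : Fin (N + 1)} (hv : v ≠ Fin.last N) :
    (wheelGraph N).Adj v (Fin.last N) :=
  ⟨hv, Or.inr (Or.inr rfl)⟩

theorem wheelGraph_adj_rim {x y : Fin (N + 1)} (h : (wheelGraph N).Adj x y)
    (hx : x ≠ Fin.last N) (hy : y ≠ Fin.last N) :
    ((y : ℕ) : ZMod N) = (x : ℕ) + 1 ∨ ((x : ℕ) : ZMod N) = (y : ℕ) + 1 := by
  obtain ⟨-, ⟨-, -, h | h⟩ | h | h⟩ := h
  · left
    rw [← h, ZMod.natCast_mod, Nat.cast_succ]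
  · right
    rw [← h, ZMod.natCast_mod, Nat.cast_succ]
  · exact absurd (Fin.ext h) hx
  · exact absurd (Fin.ext h) hy

theorem abs_le_abs_of_intCast_eq_intCast {d k : ℤ} (h : (d : ZMod N) = k) (hd : 2 * |d| ≤ N) :
    |d| ≤ |k| := by
  by_contra! hkd
  have hdvd : (N : ℤ) ∣ k - d := (ZMod.intCast_eq_intCast_iff_dvd_sub d k N).mp h
  have hlt : |k - d| < N := by linarith [abs_sub k d]
  have : k = d := sub_eq_zero.mp (Int.eq_zero_of_abs_lt_dvd hdvd hlt)
  exact hkd.ne (this ▸ rfl)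

def wheelLeft (N l j : ℕ) : Fin (N + 1) :=
  ⟨j * (N / l) % (N + 1), Nat.mod_lt _ (Nat.succ_pos N)⟩

def wheelRight (N l j : ℕ) : Fin (N + 1) :=
  ⟨((j + 1) * (N / l) - 1) % (N + 1), Nat.mod_lt _ (Nat.succ_pos N)⟩

theorem wheelPerm_eq_prod (N l : ℕ) :
    wheelPerm N l = ((List.range l).map fun j => swap (wheelLeft N l j) (wheelRight N l j)).prod :=
  rfl

theorem mul_div_add_div_le (hj : j < l) : j * (N / l) + N / l ≤ N := by
  have h₁ : (j + 1) * (N / l) ≤ l * (N / l) := Nat.mul_le_mul_right _ hj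
  have h₂ : l * (N / l) ≤ N := Nat.mul_div_le N l
  linarith [Nat.succ_mul j (N / l)]

theorem wheelLeft_val (hj : j < l) : (wheelLeft N l j : ℕ) = j * (N / l) := by
  exact Nat.mod_eq_of_lt (Nat.lt_succ_of_le ((Nat.le_add_right _ _).trans (mul_div_add_div_le hj)))

theorem wheelRight_val (hm : 0 < N / l) (hj : j < l) :
    (wheelRight N l j : ℕ) = j * (N / l) + (N / l - 1) := by
  have := mul_div_add_div_le (N := N) hj
  show ((j + 1) * (N / l) - 1) % (N + 1) = _
  rw [Nat.succ_mul]
  generalize N / l = m at hm this ⊢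
  exact (Nat.mod_eq_of_lt (by omega)).trans (by omega)

theorem wheelLeft_inj (hm : 0 < N / l) {i : ℕ} (hi : i < l) (hj : j < l)
    (h : wheelLeft N l i = wheelLeft N l j) : i = j := by
  have h' := congrArg Fin.val h
  rw [wheelLeft_val hi, wheelLeft_val hj] at h'
  exact Nat.eq_of_mul_eq_mul_right hm h'

theorem wheelRight_inj (hm : 0 < N / l) {i : ℕ} (hi : i < l) (hj : j < l)
    (h : wheelRight N l i = wheelRight N l j) : i = j := by
  have h' := congrArg Fin.val h
  rw [wheelRight_val hm hi, wheelRight_val hm hj, Nat.add_right_cancel_iff] at h'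
  exact Nat.eq_of_mul_eq_mul_right hm h'

theorem wheelLeft_ne_wheelRight (hm : 2 ≤ N / l) {i : ℕ} (hi : i < l) (hj : j < l) :
    wheelLeft N l i ≠ wheelRight N l j := by
  intro h
  have h' := congrArg (fun x : Fin (N + 1) => (x : ℕ) % (N / l)) h
  simp only [wheelLeft_val hi, wheelRight_val (N := N) (by omega) hj, Nat.mul_mod_left,
    Nat.mul_add_mod'] at h'
  rw [Nat.mod_eq_of_lt (by omega)] at h'
  omega

theorem wheelPerm_wheelLeft (hm : 2 ≤ N / l) (hj : j < l) :
    wheelPerm N l (wheelLeft N l j) = wheelRight N l j := by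
  simp only [wheelPerm_eq_prod]
  refine prod_map_swap_apply_left List.nodup_range ?_ ?_ ?_ (List.mem_range.mpr hj) <;>
    simp only [List.mem_range]
  · exact fun i hi j hj => wheelLeft_inj (by omega) hi hj
  · exact fun i hi j hj => wheelRight_inj (by omega) hi hj
  · exact fun i hi j hj => wheelLeft_ne_wheelRight hm hi hj

theorem wheelPerm_wheelRight (hm : 2 ≤ N / l) (hj : j < l) :
    wheelPerm N l (wheelRight N l j) = wheelLeft N l j := by
  simp only [wheelPerm_eq_prod, swap_comm (wheelLeft N l _)]
  refine prod_map_swap_apply_left List.nodup_range ?_ ?_ ?_ (List.mem_range.mpr hj) <;>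
    simp only [List.mem_range]
  · exact fun i hi j hj => wheelRight_inj (by omega) hi hj
  · exact fun i hi j hj => wheelLeft_inj (by omega) hi hj
  · exact fun i hi j hj => (wheelLeft_ne_wheelRight hm hj hi).symm

def wheelMoved (N l : ℕ) : Finset (Fin (N + 1)) :=
  (Finset.range l).image (wheelLeft N l) ∪ (Finset.range l).image (wheelRight N l)

theorem card_wheelMoved (hm : 2 ≤ N / l) : (wheelMoved N l).card = 2 * l := by
  rw [wheelMoved, Finset.card_union_of_disjoint, Finset.card_image_of_injOn,
    Finset.card_image_of_injOn, Finset.card_range, two_mul]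
  · exact fun i hi j hj => wheelRight_inj (by omega) (Finset.mem_range.mp hi)
      (Finset.mem_range.mp hj)
  · exact fun i hi j hj => wheelLeft_inj (by omega) (Finset.mem_range.mp hi)
      (Finset.mem_range.mp hj)
  · simp only [Finset.disjoint_left, Finset.mem_image, Finset.mem_range]
    rintro _ ⟨i, hi, rfl⟩ ⟨j, hj, h⟩
    exact wheelLeft_ne_wheelRight hm hi hj h.symm

theorem wheelMoved_ne_last (hm : 2 ≤ N / l) {v : Fin (N + 1)} (hv : v ∈ wheelMoved N l) :
    v ≠ Fin.last N := by
  rw [Ne, Fin.ext_iff, Fin.val_last]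
  simp only [wheelMoved, Finset.mem_union, Finset.mem_image, Finset.mem_range] at hv
  rcases hv with ⟨j, hj, rfl⟩ | ⟨j, hj, rfl⟩
  · rw [wheelLeft_val hj]
    have := mul_div_add_div_le (N := N) hj
    generalize N / l = m at hm this
    omega
  · rw [wheelRight_val (by omega) hj]
    have := mul_div_add_div_le (N := N) hj
    generalize N / l = m at hm this
    omega

theorem exists_wheelPerm_apply_eq_add (hm : 2 ≤ N / l) {v : Fin (N + 1)}
    (hv : v ∈ wheelMoved N l) :
    ∃ d : ℤ, |d| = (N / l - 1 : ℕ) ∧ ((wheelPerm N l v : ℕ) : ZMod N) = (v : ℕ) + d := by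
  simp only [wheelMoved, Finset.mem_union, Finset.mem_image, Finset.mem_range] at hv
  rcases hv with ⟨j, hj, rfl⟩ | ⟨j, hj, rfl⟩
  · refine ⟨(N / l - 1 : ℕ), abs_of_nonneg (Int.natCast_nonneg _), ?_⟩
    rw [wheelPerm_wheelLeft hm hj, wheelRight_val (by omega) hj, wheelLeft_val hj, Nat.cast_add,
      Int.cast_natCast]
  · refine ⟨-(N / l - 1 : ℕ), by rw [abs_neg, abs_of_nonneg (Int.natCast_nonneg _)], ?_⟩
    rw [wheelPerm_wheelRight hm hj, wheelRight_val (by omega) hj, wheelLeft_val hj, Nat.cast_add,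
      Int.cast_neg, Int.cast_natCast, add_neg_cancel_right]

theorem min_le_length_of_prod_eq_wheelPerm (hl : 2 ≤ l) {L : List (Perm (Fin (N + 1)))}
    (hL : ∀ σ ∈ L, IsSwapRound (wheelGraph N) σ) (hprod : L.prod = wheelPerm N l) :
    min (2 * l) (N / l - 1) ≤ L.length := by
  obtain hm | hm := lt_or_ge (N / l) 2
  · exact (min_le_right _ _).trans (by omega)
  by_cases hvisit : ∀ v ∈ wheelMoved N l, ∃ M, M <:+ L ∧ M.prod v = Fin.last N
  · refine (min_le_left _ _).trans ?_
    rw [← card_wheelMoved hm]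
    exact card_le_length_of_forall_visit _ fun v hv => ⟨wheelMoved_ne_last hm hv, hvisit v hv⟩
  push Not at hvisit
  obtain ⟨v, hv, havoid⟩ := hvisit
  obtain ⟨d, hd, hdv⟩ := exists_wheelPerm_apply_eq_add hm hv
  obtain ⟨k, hk, hkv⟩ := exists_abs_le_length_of_forall_suffix_ne
    (fun x : Fin (N + 1) => ((x : ℕ) : ZMod N)) (Fin.last N) (fun _ _ => wheelGraph_adj_rim) hL
    havoid
  rw [hprod, hdv] at hkv
  have h2d : 2 * |d| ≤ N := by
    have := (Nat.mul_le_mul_right (N / l) hl).trans (Nat.mul_div_le N l)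
    rw [hd]
    generalize N / l = m at this hm
    omega
  have hdk := abs_le_abs_of_intCast_eq_intCast (add_left_cancel hkv) h2d
  refine (min_le_right _ _).trans ?_
  exact_mod_cast hd ▸ hdk.trans hk

end Wheel

theorem wheelPerm_routing_lower_general (N l : ℕ) (hl : 2 ≤ l) :
    min (2 * l) (N / l - 1) ≤ rtS (wheelGraph N) (wheelPerm N l) :=
  le_rtS (exists_swapRounds_prod_eq_of_forall_adj (Fin.last N) (fun _ => wheelGraph_adj_last) _)
    fun _ => min_le_length_of_prod_eq_wheelPerm hl

/-- Lower bound on the swap routing time of `π_wheel^l` on the wheel graph: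
`rt_S(W_{N+1}, π_wheel^l) ≥ min {2l, N/l − 1}`. -/
theorem wheelPerm_routing_lower (N l : ℕ) (hN : 0 < N) (hl : 2 ≤ l) (hdvd : l ∣ N) :
    min (2 * l) (N / l - 1) ≤ rtS (wheelGraph N) (wheelPerm N l) :=
  wheelPerm_routing_lower_general N l hl
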